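/- Let G = {1, c} be a group of order 2, let A′ and A″ be abelian groups with A″ 2-divisible (multiplication by 2 is surjective on A″), and let A = A′ × A″ carry the G-action c • (x, y) = (x, −y). Then G acts trivially on A[2] = A′[2] × A″[2], so H¹(G, A[2]) = Hom(G, A[2]), and under this identification the kernel of the natural map H¹(G, A[2]) → H¹(G, A) induced by the inclusion A[2] ↪ A equals {ξ ∈ Hom(G, A[2]) : ξ(c) ∈ {0} × A″[2]}, i.e. the image of the natural map Hom(G, A″[2]) → Hom(G, A[2]) induced by the inclusion y ↦ (0, y). -/

import Mathlib

namespace SelmerCompanion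

variable (G : Type) [Group G]

/-- The group of 1-cocycles `G → A` (nonabelian convention `f (g*h) = g • f h + f g`). -/
def cocycles (A : Type) [AddCommGroup A] [DistribMulAction G A] : AddSubgroup (G → A) where
  carrier := {f | ∀ g h : G, f (g * h) = g • f h + f g}
  zero_mem' := by intro g h; simp
  add_mem' := by
    intro f₁ f₂ h₁ h₂ g h
    simp only [Pi.add_apply, h₁ g h, h₂ g h, smul_add]
    abel
  neg_mem' := by
    intro f hf g h
    simp only [Pi.neg_apply, hf g h, smul_neg]
    abel

theorem mem_cocycles {A : Type} [AddCommGroup A] [DistribMulAction G A] {f : G → A} :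
    f ∈ cocycles G A ↔ ∀ g h : G, f (g * h) = g • f h + f g := Iff.rfl

/-- The subgroup of 1-coboundaries inside the 1-cocycles. -/
def coboundaries (A : Type) [AddCommGroup A] [DistribMulAction G A] :
    AddSubgroup (cocycles G A) where
  carrier := {f | ∃ a : A, ∀ g : G, (f : G → A) g = g • a - a}
  zero_mem' := ⟨0, by simp⟩
  add_mem' := by
    rintro f₁ f₂ ⟨a, ha⟩ ⟨b, hb⟩
    refine ⟨a + b, fun g => ?_⟩
    simp only [AddSubgroup.coe_add, Pi.add_apply, ha g, hb g, smul_add]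
    abel
  neg_mem' := by
    rintro f ⟨a, ha⟩
    refine ⟨-a, fun g => ?_⟩
    simp only [AddSubgroup.coe_neg, Pi.neg_apply, ha g, smul_neg]
    abel

/-- First group cohomology: 1-cocycles modulo 1-coboundaries. -/
def H1 (A : Type) [AddCommGroup A] [DistribMulAction G A] :=
  cocycles G A ⧸ coboundaries G A

instance (A : Type) [AddCommGroup A] [DistribMulAction G A] : AddCommGroup (H1 G A) :=
  inferInstanceAs (AddCommGroup (_ ⧸ _))

/-- The map on 1-cocycles induced by a `G`-equivariant additive map. -/
def cocyclesMap {A B : Type} [AddCommGroup A] [DistribMulAction G A]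
    [AddCommGroup B] [DistribMulAction G B]
    (φ : A →+ B) (hφ : ∀ (g : G) (a : A), φ (g • a) = g • φ a) :
    cocycles G A →+ cocycles G B where
  toFun f := ⟨fun g => φ ((f : G → A) g), by
    intro g h
    simp only [f.2 g h, map_add, hφ]⟩
  map_zero' := by
    apply Subtype.ext
    funext g
    simp
  map_add' f₁ f₂ := by
    apply Subtype.ext
    funext g
    simp

/-- The map on first cohomology induced by a `G`-equivariant additive map. -/
def H1Map {A B : Type} [AddCommGroup A] [DistribMulAction G A]
    [AddCommGroup B] [DistribMulAction G B]
    (φ : A →+ B) (hφ : ∀ (g : G) (a : A), φ (g • a) = g • φ a) :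
    H1 G A →+ H1 G B :=
  QuotientAddGroup.map _ _ (cocyclesMap G φ hφ) (by
    rintro f ⟨a, ha⟩
    exact ⟨φ a, fun g => by simp [cocyclesMap, ha g, hφ]⟩)

/-- The 2-torsion subgroup `A[2] = {a : 2a = 0}`. -/
def twoTorsion (A : Type) [AddCommGroup A] : AddSubgroup A where
  carrier := {a | 2 • a = 0}
  zero_mem' := by simp
  add_mem' := by
    intro a b ha hb
    simp only [Set.mem_setOf_eq] at *
    rw [smul_add, ha, hb, add_zero]
  neg_mem' := by
    intro a ha
    simp only [Set.mem_setOf_eq] at *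
    rw [smul_neg, ha, neg_zero]

theorem mem_twoTorsion {A : Type} [AddCommGroup A] {a : A} :
    a ∈ twoTorsion A ↔ 2 • a = 0 := Iff.rfl

instance twoTorsionAction (A : Type) [AddCommGroup A] [DistribMulAction G A] :
    DistribMulAction G (twoTorsion A) where
  smul g a := ⟨g • (a : A), by
    have ha : 2 • (a : A) = 0 := a.2
    show 2 • (g • (a : A)) = 0
    rw [← smul_comm g (2 : ℕ) (a : A), ha, smul_zero]⟩
  one_smul a := Subtype.ext (one_smul G (a : A))
  mul_smul g h a := Subtype.ext (mul_smul g h (a : A))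
  smul_zero g := Subtype.ext (smul_zero g)
  smul_add g a b := Subtype.ext (smul_add g (a : A) (b : A))

@[simp] theorem twoTorsion_coe_smul {A : Type} [AddCommGroup A] [DistribMulAction G A]
    (g : G) (a : twoTorsion A) : ((g • a : twoTorsion A) : A) = g • (a : A) := rfl

/-- The subgroup of `G`-invariants of `A`. -/
def invariants (A : Type) [AddCommGroup A] [DistribMulAction G A] : AddSubgroup A where
  carrier := {a | ∀ g : G, g • a = a}
  zero_mem' := fun g => smul_zero g
  add_mem' := by
    intro a b ha hb g
    rw [smul_add, ha g, hb g]
  neg_mem' := by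
    intro a ha g
    rw [smul_neg, ha g]

theorem mem_invariants {A : Type} [AddCommGroup A] [DistribMulAction G A] {a : A} :
    a ∈ invariants G A ↔ ∀ g : G, g • a = a := Iff.rfl

/-!
Since `-y = y` on `A″[2]`, the involution `c` fixes `A[2]`, so 1-cocycles with values in `A[2]`
are homomorphisms. A 1-cocycle on `{1, c}` is determined by its value at `c`, and it is a
coboundary in `A` iff that value lies in `{c • a - a} = {(0, -2y)} = {0} × 2A″`; by
2-divisibility of `A″` this set contains `{0} × A″[2]`.
-/

theorem neg_eq_self_of_mem_twoTorsion {A : Type} [AddCommGroup A] {a : A}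
    (ha : a ∈ twoTorsion A) : -a = a :=
  neg_eq_of_add_eq_zero_left (by rwa [mem_twoTorsion, two_smul] at ha)

theorem mem_twoTorsion_prod {A B : Type} [AddCommGroup A] [AddCommGroup B] (a : A × B) :
    a ∈ twoTorsion (A × B) ↔ a.1 ∈ twoTorsion A ∧ a.2 ∈ twoTorsion B := by
  simp only [mem_twoTorsion, Prod.ext_iff, Prod.smul_fst, Prod.smul_snd, Prod.fst_zero,
    Prod.snd_zero]

section

variable {G}

theorem mem_cocycles_iff_of_smul_eq_self {A : Type} [AddCommGroup A] [DistribMulAction G A]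
    (htriv : ∀ (g : G) (a : A), g • a = a) {f : G → A} :
    f ∈ cocycles G A ↔ ∀ g h : G, f (g * h) = f g + f h := by
  simp only [mem_cocycles, htriv, add_comm]

theorem cocycles_apply_one {A : Type} [AddCommGroup A] [DistribMulAction G A]
    (f : cocycles G A) : (f : G → A) 1 = 0 := by
  have h := f.2 1 1
  rw [one_mul, one_smul] at h
  exact left_eq_add.mp h

theorem mk_mem_ker_H1Map_iff {A B : Type} [AddCommGroup A] [DistribMulAction G A]
    [AddCommGroup B] [DistribMulAction G B]
    (φ : A →+ B) (hφ : ∀ (g : G) (a : A), φ (g • a) = g • φ a) (f : cocycles G A) :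
    (QuotientAddGroup.mk f : H1 G A) ∈ (H1Map G φ hφ).ker ↔
      cocyclesMap G φ hφ f ∈ coboundaries G B :=
  QuotientAddGroup.eq_zero_iff _

theorem mem_coboundaries_iff_of_forall_eq_one_or_eq {A : Type} [AddCommGroup A]
    [DistribMulAction G A] {c : G} (hG : ∀ g : G, g = 1 ∨ g = c) (f : cocycles G A) :
    f ∈ coboundaries G A ↔ ∃ a : A, (f : G → A) c = c • a - a := by
  refine ⟨fun ⟨a, ha⟩ => ⟨a, ha c⟩, fun ⟨a, ha⟩ => ⟨a, fun g => ?_⟩⟩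
  rcases hG g with rfl | rfl
  · rw [cocycles_apply_one, one_smul, sub_self]
  · exact ha

variable {A' A'' : Type} [AddCommGroup A'] [AddCommGroup A''] [DistribMulAction G (A' × A'')]
  {c : G}

theorem smul_eq_self_of_mem_twoTorsion_prod
    (hact : ∀ (x : A') (y : A''), c • ((x, y) : A' × A'') = (x, -y))
    (hG : ∀ g : G, g = 1 ∨ g = c) (g : G) (a : twoTorsion (A' × A'')) : g • a = a := by
  rcases hG g with rfl | rfl
  · exact one_smul G a
  · obtain ⟨⟨x, y⟩, ha⟩ := a
    have hy : -y = y := neg_eq_self_of_mem_twoTorsion ((mem_twoTorsion_prod _).1 ha).2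
    exact Subtype.ext (by rw [twoTorsion_coe_smul, hact, hy])

theorem exists_eq_smul_sub_self_iff_fst_eq_zero
    (hact : ∀ (x : A') (y : A''), c • ((x, y) : A' × A'') = (x, -y))
    (hdiv : ∀ y : A'', ∃ z : A'', 2 • z = y)
    {b : A' × A''} (hb : b.2 ∈ twoTorsion A'') :
    (∃ a : A' × A'', b = c • a - a) ↔ b.1 = 0 := by
  constructor
  · rintro ⟨⟨x, y⟩, rfl⟩
    rw [hact, Prod.mk_sub_mk, sub_self]
  · intro hb₁
    obtain ⟨z, hz⟩ := hdiv b.2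
    refine ⟨(0, z), Prod.ext ?_ ?_⟩
    · rw [hact, Prod.mk_sub_mk, sub_self, hb₁]
    · rw [hact, Prod.mk_sub_mk, ← neg_eq_self_of_mem_twoTorsion hb, ← hz, two_smul]
      exact neg_add' z z

end

theorem statement8_general (G : Type) [Group G] (c : G) (hG : ∀ g : G, g = 1 ∨ g = c)
    (A' A'' : Type) [AddCommGroup A'] [AddCommGroup A'']
    [DistribMulAction G (A' × A'')]
    (hact : ∀ (x : A') (y : A''), c • ((x, y) : A' × A'') = (x, -y))
    (hdiv : ∀ y : A'', ∃ z : A'', 2 • z = y) :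
    (∀ (g : G) (a : twoTorsion (A' × A'')), g • a = a) ∧
    (∀ a : A' × A'',
      a ∈ twoTorsion (A' × A'') ↔ a.1 ∈ twoTorsion A' ∧ a.2 ∈ twoTorsion A'') ∧
    (∀ f : G → twoTorsion (A' × A''),
      f ∈ cocycles G (twoTorsion (A' × A'')) ↔ ∀ g h : G, f (g * h) = f g + f h) ∧
    (∀ f : cocycles G (twoTorsion (A' × A'')),
      (QuotientAddGroup.mk f : H1 G (twoTorsion (A' × A''))) ∈
          (H1Map G (twoTorsion (A' × A'')).subtype (fun _ _ => rfl)).ker ↔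
        (((f : G → twoTorsion (A' × A'')) c : A' × A'')).1 = 0) := by
  have htriv := smul_eq_self_of_mem_twoTorsion_prod hact hG
  refine ⟨htriv, mem_twoTorsion_prod, fun _ => mem_cocycles_iff_of_smul_eq_self htriv,
    fun f => ?_⟩
  refine (mk_mem_ker_H1Map_iff _ _ f).trans ?_
  rw [mem_coboundaries_iff_of_forall_eq_one_or_eq hG]
  exact exists_eq_smul_sub_self_iff_fst_eq_zero hact hdiv
    ((mem_twoTorsion_prod _).1 ((f : G → twoTorsion (A' × A'')) c).2).2

/-- Let `G = {1, c}` act on `A = A′ × A″` by `c • (x, y) = (x, -y)`, with `A″` 2-divisible.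
Then `G` acts trivially on `A[2] = A′[2] × A″[2]` (so `H¹(G, A[2]) = Hom(G, A[2])`), and
under this identification the kernel of `H¹(G, A[2]) → H¹(G, A)` consists exactly of the
classes `ξ` with `ξ(c) ∈ {0} × A″[2]`. -/
theorem statement8 (G : Type) [Group G] (c : G) (hc : c ≠ 1) (hG : ∀ g : G, g = 1 ∨ g = c)
    (A' A'' : Type) [AddCommGroup A'] [AddCommGroup A'']
    [DistribMulAction G (A' × A'')]
    (hact : ∀ (x : A') (y : A''), c • ((x, y) : A' × A'') = (x, -y))
    (hdiv : ∀ y : A'', ∃ z : A'', 2 • z = y) :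
    (∀ (g : G) (a : twoTorsion (A' × A'')), g • a = a) ∧
    (∀ a : A' × A'',
      a ∈ twoTorsion (A' × A'') ↔ a.1 ∈ twoTorsion A' ∧ a.2 ∈ twoTorsion A'') ∧
    (∀ f : G → twoTorsion (A' × A''),
      f ∈ cocycles G (twoTorsion (A' × A'')) ↔ ∀ g h : G, f (g * h) = f g + f h) ∧
    (∀ f : cocycles G (twoTorsion (A' × A'')),
      (QuotientAddGroup.mk f : H1 G (twoTorsion (A' × A''))) ∈
          (H1Map G (twoTorsion (A' × A'')).subtype (fun _ _ => rfl)).ker ↔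
        (((f : G → twoTorsion (A' × A'')) c : A' × A'')).1 = 0) :=
  statement8_general G c hG A' A'' hact hdiv

end SelmerCompanion
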